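/- arXiv:1112.5563 — 2 statements merged into one kernel-verified Lean document; each statement's English description precedes it below -/
import Mathlib

section
/- In a semi-additive category, composition is bilinear with respect to the canonical commutative monoid structure on Hom-sets: h ∘ (f + g) = h∘f + h∘g and (f + g) ∘ k = f∘k + g∘k, and h ∘ 0 = 0 = 0 ∘ k. -/
/-!
`homAdd f g` is `prod.lift f g` followed by the fixed map `inv (canMap y y) ≫ codiag y`.
Precomposition passes through `prod.lift`, so it distributes over `homAdd`. For postcomposition,
`canMap` is natural, hence so is its inverse, and `codiag` is natural; so `h` can be pushed from
the target back to the two components. The zero laws hold for any zero morphisms.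
-/

open CategoryTheory CategoryTheory.Limits

universe v u

variable {C : Type u} [Category.{v} C] [HasZeroObject C] [HasZeroMorphisms C]
  [HasBinaryProducts C] [HasBinaryCoproducts C]

/-- The canonical comparison map `x ⊔ y ⟶ x × y`. -/
noncomputable def canMap (x y : C) : (x ⨿ y) ⟶ (x ⨯ y) :=
  coprod.desc (prod.lift (𝟙 x) 0) (prod.lift 0 (𝟙 y))

variable [∀ x y : C, IsIso (canMap x y)]

/-- The canonical addition on Hom-sets of a semi-additive category. -/
noncomputable def homAdd {x y : C} (f g : x ⟶ y) : x ⟶ y :=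
  prod.lift f g ≫ inv (canMap y y) ≫ coprod.desc (𝟙 y) (𝟙 y)

omit [HasZeroObject C] [∀ x y : C, IsIso (canMap x y)] in
theorem canMap_natural {x y x' y' : C} (f : x ⟶ x') (g : y ⟶ y') :
    canMap x y ≫ prod.map f g = coprod.map f g ≫ canMap x' y' := by
  apply coprod.hom_ext <;> apply prod.hom_ext <;> simp [canMap]

omit [HasZeroObject C] in
theorem inv_canMap_natural {x y x' y' : C} (f : x ⟶ x') (g : y ⟶ y') :
    inv (canMap x y) ≫ coprod.map f g = prod.map f g ≫ inv (canMap x' y') := by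
  rw [IsIso.inv_comp_eq, ← Category.assoc, canMap_natural, Category.assoc,
    IsIso.hom_inv_id, Category.comp_id]

omit [HasZeroObject C] in
theorem homAdd_comp {x y z : C} (f g : x ⟶ y) (h : y ⟶ z) :
    homAdd f g ≫ h = homAdd (f ≫ h) (g ≫ h) := by
  calc homAdd f g ≫ h
      = prod.lift f g ≫ inv (canMap y y) ≫ coprod.map h h ≫ codiag z := by
        simp only [homAdd, coprod.map_codiag, Category.assoc]
    _ = (prod.lift f g ≫ prod.map h h) ≫ inv (canMap z z) ≫ codiag z := by
        rw [reassoc_of% inv_canMap_natural, Category.assoc]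
    _ = homAdd (f ≫ h) (g ≫ h) := by rw [prod.lift_map, homAdd]

omit [HasZeroObject C] in
theorem comp_homAdd {w x y : C} (k : w ⟶ x) (f g : x ⟶ y) :
    k ≫ homAdd f g = homAdd (k ≫ f) (k ≫ g) := by
  rw [homAdd, homAdd, prod.comp_lift_assoc]

/-- In a semi-additive category, composition is bilinear with respect to the canonical
commutative monoid structure on Hom-sets: `h ∘ (f + g) = h∘f + h∘g`,
`(f + g) ∘ k = f∘k + g∘k`, `h ∘ 0 = 0` and `0 ∘ k = 0`. -/
theorem comp_bilinear_homAdd :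
    (∀ (x y z : C) (f g : x ⟶ y) (h : y ⟶ z),
      homAdd f g ≫ h = homAdd (f ≫ h) (g ≫ h)) ∧
    (∀ (w x y : C) (k : w ⟶ x) (f g : x ⟶ y),
      k ≫ homAdd f g = homAdd (k ≫ f) (k ≫ g)) ∧
    (∀ (x y z : C) (h : y ⟶ z), (0 : x ⟶ y) ≫ h = 0) ∧
    (∀ (w x y : C) (k : w ⟶ x), k ≫ (0 : x ⟶ y) = 0) :=
  ⟨fun _ _ _ => homAdd_comp, fun _ _ _ => comp_homAdd,
    fun _ _ _ _ => zero_comp, fun _ _ _ _ => comp_zero⟩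
end

section
/- Group completion of a semi-additive category: given a semi-additive category C, the category C⁻¹ with the same objects and Hom-sets the Grothendieck group completions of the Hom-monoids of C is an additive category, the canonical functor α : C → C⁻¹ is additive, and for every additive category D, precomposition with α gives a bijection (indeed isomorphism of categories) between additive functors C⁻¹ → D and additive functors C → D. -/
open CategoryTheory CategoryTheory.Limits

universe v u v' u' v'' u''

/-- A category enriched in commutative monoids: each Hom-set is a commutative additive
monoid, and composition is bilinear and compatible with the zero morphisms. -/
class CMonEnriched (C : Type u) [Category.{v} C] where
  homMonoid : ∀ x y : C, AddCommMonoid (x ⟶ y)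
  add_comp : ∀ ⦃x y z : C⦄ (f g : x ⟶ y) (h : y ⟶ z), (f + g) ≫ h = f ≫ h + g ≫ h
  comp_add : ∀ ⦃x y z : C⦄ (f : x ⟶ y) (g h : y ⟶ z), f ≫ (g + h) = f ≫ g + f ≫ h
  zero_comp : ∀ ⦃x y z : C⦄ (h : y ⟶ z), (0 : x ⟶ y) ≫ h = 0
  comp_zero : ∀ ⦃x y z : C⦄ (f : x ⟶ y), f ≫ (0 : y ⟶ z) = 0

attribute [instance] CMonEnriched.homMonoid

/-- The zero-morphism structure underlying a commutative-monoid enrichment. -/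
instance (priority := 100) CMonEnriched.toHasZeroMorphisms (C : Type u) [Category.{v} C]
    [CMonEnriched C] : HasZeroMorphisms C where
  zero x y := ⟨0⟩
  comp_zero f _ := CMonEnriched.comp_zero f
  zero_comp _ _ _ h := CMonEnriched.zero_comp h


/-!
Every morphism of `D` between `α x` and `α y` is a difference `α f - α f'`, and `α f - α f'`
determines `f, f'` up to the cancellation relation of the Hom-monoid, which an additive `F`
respects. Hence `α f - α f' ↦ F f - F f'` is well defined; it is additive, and bilinearity of
composition makes it functorial. Transporting it along the bijection `α.obj` gives the unique
additive factorisation of `F`. Zero objects and binary biproducts pass from `C` to `D` because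
they are characterised by the equations `𝟙 = 0` and `fst ≫ inl + snd ≫ inr = 𝟙`, which
additive maps preserve.
-/

lemma CMonEnriched.biprod_total {C : Type u} [Category.{v} C] [CMonEnriched C]
    [HasBinaryBiproducts C] (x y : C) :
    (biprod.fst : x ⊞ y ⟶ x) ≫ biprod.inl + (biprod.snd : x ⊞ y ⟶ y) ≫ biprod.inr =
      𝟙 (x ⊞ y) := by
  apply biprod.hom_ext' <;> simp [CMonEnriched.comp_add, ← Category.assoc]

namespace CategoryTheory.Functor

variable {C : Type u} [Category.{v} C] {D : Type u'} [Category.{v'} D]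
  {E : Type u''} [Category.{v''} E]

section LiftOfSurjectiveObj

variable (α : C ⥤ D) (hobj : Function.Surjective α.obj) (F : C ⥤ E)
  (φ : ∀ {x y : C}, (α.obj x ⟶ α.obj y) → (F.obj x ⟶ F.obj y))
  (hφ : ∀ {x y : C} (f : x ⟶ y), φ (α.map f) = F.map f)
  (φ_comp : ∀ {x y z : C} (g : α.obj x ⟶ α.obj y) (g' : α.obj y ⟶ α.obj z),
    φ (g ≫ g') = φ g ≫ φ g')

include hφ φ_comp in
noncomputable def liftOfSurjectiveObj : D ⥤ E where
  obj d := F.obj (Function.surjInv hobj d)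
  map {d d'} g := φ (eqToHom (Function.surjInv_eq hobj d) ≫ g ≫
    eqToHom (Function.surjInv_eq hobj d').symm)
  map_id d := by
    simp only [Category.id_comp, eqToHom_trans, eqToHom_refl]
    rw [← α.map_id, hφ, F.map_id]
  map_comp g g' := by
    simp only [← φ_comp, Category.assoc, eqToHom_trans_assoc, eqToHom_refl, Category.id_comp]

lemma liftOfSurjectiveObj_map (hinj : Function.Injective α.obj) {x y : C}
    (g : α.obj x ⟶ α.obj y) :
    (liftOfSurjectiveObj α hobj F φ hφ φ_comp).map g =
      eqToHom (congrArg F.obj (Function.leftInverse_surjInv ⟨hinj, hobj⟩ x)) ≫ φ g ≫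
        eqToHom (congrArg F.obj (Function.leftInverse_surjInv ⟨hinj, hobj⟩ y)).symm := by
  have conj : ∀ {x' y' : C} (p : x' = x) (q : y = y'),
      φ (eqToHom (congrArg α.obj p) ≫ g ≫ eqToHom (congrArg α.obj q)) =
        eqToHom (congrArg F.obj p) ≫ φ g ≫ eqToHom (congrArg F.obj q) := by
    rintro _ _ rfl rfl
    simp
  exact conj (Function.leftInverse_surjInv ⟨hinj, hobj⟩ x)
    (Function.leftInverse_surjInv ⟨hinj, hobj⟩ y).symm

lemma comp_liftOfSurjectiveObj (hinj : Function.Injective α.obj) :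
    α ⋙ liftOfSurjectiveObj α hobj F φ hφ φ_comp = F :=
  Functor.ext (fun x => congrArg F.obj (Function.leftInverse_surjInv ⟨hinj, hobj⟩ x))
    fun x y f => by
      rw [comp_map, liftOfSurjectiveObj_map α hobj F φ hφ φ_comp hinj, hφ]
      rfl

lemma additive_liftOfSurjectiveObj [Preadditive D] [Preadditive E]
    (φ_add : ∀ {x y : C} (g g' : α.obj x ⟶ α.obj y), φ (g + g') = φ g + φ g') :
    (liftOfSurjectiveObj α hobj F φ hφ φ_comp).Additive where
  map_add {_ _ _ _} := by
    simp only [liftOfSurjectiveObj, Preadditive.add_comp, Preadditive.comp_add, φ_add]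
    rfl

end LiftOfSurjectiveObj

lemma ext_of_additive_of_comp_eq [Preadditive D] [Preadditive E] (α : C ⥤ D)
    (hobj : Function.Surjective α.obj)
    (hsurj :
      ∀ {x y : C} (g : α.obj x ⟶ α.obj y), ∃ f f' : x ⟶ y, g = α.map f - α.map f')
    {G G' : D ⥤ E} [G.Additive] [G'.Additive] (h : α ⋙ G = α ⋙ G') : G = G' := by
  refine Functor.ext (fun d => ?_) fun d d' g => ?_
  · obtain ⟨x, rfl⟩ := hobj d
    exact Functor.congr_obj h x
  · obtain ⟨x, rfl⟩ := hobj d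
    obtain ⟨y, rfl⟩ := hobj d'
    obtain ⟨f, f', rfl⟩ := hsurj g
    rw [map_sub, map_sub, ← comp_map, ← comp_map, ← comp_map, ← comp_map,
      congr_hom h f, congr_hom h f', Preadditive.sub_comp, Preadditive.comp_sub]

section MapAdd

variable [CMonEnriched C] [Preadditive D] (α : C ⥤ D)
  (hadd : ∀ {x y : C} (f g : x ⟶ y), α.map (f + g) = α.map f + α.map g)
include hadd

lemma map_zero_of_map_add {x y : C} : α.map (0 : x ⟶ y) = 0 :=
  (AddMonoidHom.mk' (α.map (X := x) (Y := y)) hadd).map_zero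

lemma hasZeroObject_of_map_add [HasZeroObject C] : HasZeroObject D := by
  open ZeroObject in
  have hzero : IsZero (α.obj 0) := by
    rw [IsZero.iff_id_eq_zero, ← α.map_id, (isZero_zero C).eq_of_src (𝟙 0) 0,
      map_zero_of_map_add α hadd]
  exact hzero.hasZeroObject

lemma hasBinaryBiproducts_of_map_add [HasBinaryBiproducts C]
    (hobj : Function.Surjective α.obj) : HasBinaryBiproducts D := by
  have : α.PreservesZeroMorphisms := ⟨fun _ _ => map_zero_of_map_add α hadd⟩
  refine ⟨fun d d' => ?_⟩
  obtain ⟨x, rfl⟩ := hobj d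
  obtain ⟨y, rfl⟩ := hobj d'
  have total : α.map biprod.fst ≫ α.map biprod.inl + α.map biprod.snd ≫ α.map biprod.inr =
      𝟙 (α.obj (x ⊞ y)) := by
    rw [← α.map_comp, ← α.map_comp, ← hadd, CMonEnriched.biprod_total, α.map_id]
  exact HasBinaryBiproduct.mk
    ⟨_, isBinaryBilimitOfTotal (α.mapBinaryBicone (BinaryBiproduct.bicone x y)) total⟩

end MapAdd

/-- Each `α.obj x ⟶ α.obj y` is the Grothendieck group of the monoid `x ⟶ y`, with `α.map` as
the canonical map. -/
structure IsHomGroupCompletion [CMonEnriched C] [Preadditive D] (α : C ⥤ D) : Prop where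
  map_add : ∀ {x y : C} (f g : x ⟶ y), α.map (f + g) = α.map f + α.map g
  exists_eq_sub :
    ∀ {x y : C} (g : α.obj x ⟶ α.obj y), ∃ f f' : x ⟶ y, g = α.map f - α.map f'
  map_eq_map_iff :
    ∀ {x y : C} (f f' : x ⟶ y), α.map f = α.map f' ↔ ∃ h : x ⟶ y, f + h = f' + h

namespace IsHomGroupCompletion

variable [CMonEnriched C] [Preadditive D] [Preadditive E] {α : C ⥤ D}
  (hα : α.IsHomGroupCompletion) {F : C ⥤ E}
  (hF : ∀ {x y : C} (f g : x ⟶ y), F.map (f + g) = F.map f + F.map g)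

include hα hF in
lemma map_sub_eq_of_map_sub_eq {x y : C} {f f' k k' : x ⟶ y}
    (h : α.map f - α.map f' = α.map k - α.map k') :
    F.map f - F.map f' = F.map k - F.map k' := by
  rw [sub_eq_sub_iff_add_eq_add, ← hα.map_add, ← hα.map_add] at h
  obtain ⟨c, hc⟩ := (hα.map_eq_map_iff _ _).1 h
  rw [sub_eq_sub_iff_add_eq_add]
  apply add_right_cancel (b := F.map c)
  rw [← hF, ← hF, ← hF, ← hF, hc]

noncomputable def liftHom (F : C ⥤ E) {x y : C} (g : α.obj x ⟶ α.obj y) :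
    F.obj x ⟶ F.obj y :=
  F.map (hα.exists_eq_sub g).choose - F.map (hα.exists_eq_sub g).choose_spec.choose

include hF

lemma liftHom_map_sub {x y : C} (f f' : x ⟶ y) :
    hα.liftHom F (α.map f - α.map f') = F.map f - F.map f' :=
  hα.map_sub_eq_of_map_sub_eq hF (hα.exists_eq_sub _).choose_spec.choose_spec.symm

lemma liftHom_map {x y : C} (f : x ⟶ y) : hα.liftHom F (α.map f) = F.map f := by
  simpa [map_zero_of_map_add α hα.map_add, map_zero_of_map_add F hF]
    using hα.liftHom_map_sub hF f 0

lemma liftHom_add {x y : C} (g g' : α.obj x ⟶ α.obj y) :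
    hα.liftHom F (g + g') = hα.liftHom F g + hα.liftHom F g' := by
  obtain ⟨f, f', rfl⟩ := hα.exists_eq_sub g
  obtain ⟨k, k', rfl⟩ := hα.exists_eq_sub g'
  have hsum :
      α.map f - α.map f' + (α.map k - α.map k') = α.map (f + k) - α.map (f' + k') := by
    rw [hα.map_add, hα.map_add]
    abel
  rw [hsum, hα.liftHom_map_sub hF, hα.liftHom_map_sub hF, hα.liftHom_map_sub hF, hF, hF]
  abel

lemma liftHom_comp {x y z : C} (g : α.obj x ⟶ α.obj y) (g' : α.obj y ⟶ α.obj z) :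
    hα.liftHom F (g ≫ g') = hα.liftHom F g ≫ hα.liftHom F g' := by
  obtain ⟨f, f', rfl⟩ := hα.exists_eq_sub g
  obtain ⟨k, k', rfl⟩ := hα.exists_eq_sub g'
  have hprod : (α.map f - α.map f') ≫ (α.map k - α.map k') =
      α.map (f ≫ k + f' ≫ k') - α.map (f ≫ k' + f' ≫ k) := by
    simp only [hα.map_add, α.map_comp, Preadditive.sub_comp, Preadditive.comp_sub]
    abel
  rw [hprod, hα.liftHom_map_sub hF, hα.liftHom_map_sub hF, hα.liftHom_map_sub hF]
  simp only [hF, F.map_comp, Preadditive.sub_comp, Preadditive.comp_sub]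
  abel

noncomputable def lift (hobj : Function.Surjective α.obj) : D ⥤ E :=
  liftOfSurjectiveObj α hobj F (hα.liftHom F) (hα.liftHom_map hF) (hα.liftHom_comp hF)

lemma comp_lift (hobj : Function.Bijective α.obj) : α ⋙ hα.lift hF hobj.2 = F :=
  comp_liftOfSurjectiveObj α hobj.2 F _ (hα.liftHom_map hF) (hα.liftHom_comp hF) hobj.1

lemma additive_lift (hobj : Function.Surjective α.obj) : (hα.lift hF hobj).Additive :=
  additive_liftOfSurjectiveObj α hobj F _ (hα.liftHom_map hF) (hα.liftHom_comp hF)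
    (hα.liftHom_add hF)

end IsHomGroupCompletion

end CategoryTheory.Functor

theorem groupCompletion_universal_property_general
    {C : Type u} [Category.{v} C] [CMonEnriched C] [HasZeroObject C] [HasBinaryBiproducts C]
    {D : Type u'} [Category.{v'} D] [Preadditive D]
    (α : C ⥤ D) (hobj : Function.Bijective α.obj)
    (hadd : ∀ {x y : C} (f g : x ⟶ y), α.map (f + g) = α.map f + α.map g)
    (hsurj : ∀ {x y : C} (g : α.obj x ⟶ α.obj y), ∃ f f' : x ⟶ y, g = α.map f - α.map f')
    (hker : ∀ {x y : C} (f f' : x ⟶ y), α.map f = α.map f' ↔ ∃ h : x ⟶ y, f + h = f' + h) :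
    HasZeroObject D ∧ HasBinaryBiproducts D ∧
    ∀ (E : Type u'') (_ : Category.{v''} E) (_ : Preadditive E) (_ : HasZeroObject E)
      (_ : HasBinaryBiproducts E) (F : C ⥤ E),
      (∀ {x y : C} (f g : x ⟶ y), F.map (f + g) = F.map f + F.map g) →
      (∀ x y : C, F.map (0 : x ⟶ y) = 0) →
      ∃! F' : D ⥤ E,
        (∀ {x y : D} (f g : x ⟶ y), F'.map (f + g) = F'.map f + F'.map g) ∧
        α ⋙ F' = F := by
  have hα : α.IsHomGroupCompletion := ⟨hadd, hsurj, hker⟩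
  refine ⟨α.hasZeroObject_of_map_add hadd, α.hasBinaryBiproducts_of_map_add hadd hobj.2, ?_⟩
  intro E _ _ _ _ F hF _
  have := hα.additive_lift hF hobj.2
  refine ⟨hα.lift hF hobj.2, ⟨fun _ _ => Functor.map_add _, hα.comp_lift hF hobj⟩, ?_⟩
  rintro G ⟨hG, hαG⟩
  have : G.Additive := ⟨hG _ _⟩
  exact α.ext_of_additive_of_comp_eq hobj.2 hsurj (hαG.trans (hα.comp_lift hF hobj).symm)

/-- Group completion of a semi-additive category: let `C` be a semi-additive category
(enriched in commutative monoids, with a zero object and binary biproducts), and let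
`α : C ⥤ D` exhibit the preadditive category `D` as the groupification of `C`: `α` is
bijective on objects, additive, every morphism of `D` is a difference `α.map f - α.map f'`,
and `α.map f = α.map f'` holds exactly when `f + h = f' + h` for some `h` (so each Hom-group
of `D` is the Grothendieck group completion of the corresponding Hom-monoid of `C`). Then
`D` is additive (it has a zero object and biproducts), and for every additive category `E`
every additive functor `C ⥤ E` factors uniquely through `α` via an additive functor
`D ⥤ E`; i.e. precomposition with `α` is a bijection between additive functors `D ⥤ E`
and additive functors `C ⥤ E`. -/
theorem groupCompletion_universal_property
    {C : Type u} [Category.{v} C] [CMonEnriched C] [HasZeroObject C] [HasBinaryBiproducts C]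
    {D : Type u'} [Category.{v'} D] [Preadditive D]
    (α : C ⥤ D) (hobj : Function.Bijective α.obj)
    (hadd : ∀ {x y : C} (f g : x ⟶ y), α.map (f + g) = α.map f + α.map g)
    (hzero : ∀ x y : C, α.map (0 : x ⟶ y) = 0)
    (hsurj : ∀ {x y : C} (g : α.obj x ⟶ α.obj y), ∃ f f' : x ⟶ y, g = α.map f - α.map f')
    (hker : ∀ {x y : C} (f f' : x ⟶ y), α.map f = α.map f' ↔ ∃ h : x ⟶ y, f + h = f' + h) :
    HasZeroObject D ∧ HasBinaryBiproducts D ∧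
    ∀ (E : Type u'') (_ : Category.{v''} E) (_ : Preadditive E) (_ : HasZeroObject E)
      (_ : HasBinaryBiproducts E) (F : C ⥤ E),
      (∀ {x y : C} (f g : x ⟶ y), F.map (f + g) = F.map f + F.map g) →
      (∀ x y : C, F.map (0 : x ⟶ y) = 0) →
      ∃! F' : D ⥤ E,
        (∀ {x y : D} (f g : x ⟶ y), F'.map (f + g) = F'.map f + F'.map g) ∧
        α ⋙ F' = F :=
  groupCompletion_universal_property_general α hobj hadd hsurj hker
end
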